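/- arXiv:2511.07146 — 5 statements merged into one kernel-verified Lean document; each statement's English description precedes it below -/
import Mathlib

section
/- Let c > 1, X ≥ 2, 0 < λ < 1, and τ > 0. Then the number of pairs of integers (n₁, n₂) with λX < n₁, n₂ ≤ X satisfying |n₁^c - n₂^c| ≤ 1/τ is O(X + τ^{-1} X^{2-c}), with implied constant depending only on c and λ. -/
open Real Finset

theorem count_close_power_pairs (c lam : ℝ) (hc : 1 < c) (hlam0 : 0 < lam) (hlam1 : lam < 1) :
    ∃ C : ℝ, 0 < C ∧ ∀ X τ : ℝ, 2 ≤ X → 0 < τ →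
      (((Finset.Icc 1 ⌊X⌋₊ ×ˢ Finset.Icc 1 ⌊X⌋₊).filter (fun p : ℕ × ℕ =>
          lam * X < p.1 ∧ (p.1 : ℝ) ≤ X ∧ lam * X < p.2 ∧ (p.2 : ℝ) ≤ X ∧
          |(p.1 : ℝ) ^ c - (p.2 : ℝ) ^ c| ≤ 1 / τ)).card : ℝ)
        ≤ C * (X + τ⁻¹ * X ^ (2 - c)) := by
  have hc0 : (0:ℝ) < c := by linarith
  have hlp : (0:ℝ) < lam ^ (c - 1) := Real.rpow_pos_of_pos hlam0 _
  refine ⟨1 + 2 / (c * lam ^ (c - 1)), by positivity, ?_⟩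
  intro X τ hX hτ
  have hX0 : (0:ℝ) < X := by linarith
  have hlX : (0:ℝ) < lam * X := by positivity
  have hD : (0:ℝ) < c * (lam * X) ^ (c - 1) := by positivity
  set L : ℝ := 1 / (τ * (c * (lam * X) ^ (c - 1))) with hLdef
  have hL0 : 0 < L := by positivity
  set K := ⌊L⌋₊ with hKdef
  set N := ⌊X⌋₊ with hNdef
  clear_value L K N
  -- key real inequality
  have key : ∀ m n : ℕ, lam * X < m → (m : ℝ) ≤ X → lam * X < n → (n : ℝ) ≤ X →
      |(m : ℝ) ^ c - (n : ℝ) ^ c| ≤ 1 / τ → (m : ℝ) - n ≤ L := by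
    intro m n hm1 hm2 hn1 hn2 habs
    rcases le_or_gt (m : ℝ) (n : ℝ) with h | h
    · linarith
    · have hn0 : (0:ℝ) < n := lt_trans hlX hn1
      set s : ℝ := ((m : ℝ) - n) / n with hs
      have hs0 : 0 ≤ s := div_nonneg (by linarith) hn0.le
      have hb : 1 + c * s ≤ (1 + s) ^ c :=
        one_add_mul_self_le_rpow_one_add (by linarith) hc.le
      have hmeq : (m : ℝ) = n * (1 + s) := by rw [hs]; field_simp; ring
      have hmc : (m : ℝ) ^ c = (n : ℝ) ^ c * (1 + s) ^ c := by
        rw [hmeq, Real.mul_rpow hn0.le (by linarith)]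
      have hpow : (n : ℝ) ^ c = (n : ℝ) ^ (c - 1) * n := by
        rw [← Real.rpow_add_one hn0.ne' (c - 1)]; ring_nf
      have hlow : (n : ℝ) ^ c + c * (n : ℝ) ^ (c - 1) * ((m : ℝ) - n) ≤ (m : ℝ) ^ c := by
        rw [hmc]
        have h1 : (n : ℝ) ^ c * (1 + c * s) ≤ (n : ℝ) ^ c * (1 + s) ^ c :=
          mul_le_mul_of_nonneg_left hb (Real.rpow_nonneg hn0.le _)
        have h2 : (n : ℝ) ^ c * (1 + c * s) = (n : ℝ) ^ c + c * (n : ℝ) ^ (c - 1) * ((m : ℝ) - n) := by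
          rw [hpow, hs]; field_simp
        linarith [h1, h2.ge]
      have hrmono : (lam * X) ^ (c - 1) ≤ (n : ℝ) ^ (c - 1) :=
        Real.rpow_le_rpow hlX.le hn1.le (by linarith)
      have hdiff : (m : ℝ) ^ c - (n : ℝ) ^ c ≤ 1 / τ := by
        have := abs_le.mp habs
        linarith [this.2]
      have hmain : c * (lam * X) ^ (c - 1) * ((m : ℝ) - n) ≤ 1 / τ := by
        have hmn : (0:ℝ) ≤ (m : ℝ) - n := by linarith
        nlinarith [mul_le_mul_of_nonneg_right hrmono hmn]
      rw [hLdef]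
      calc (m : ℝ) - n ≤ (1 / τ) / (c * (lam * X) ^ (c - 1)) := by
            rw [le_div_iff₀ hD]; linarith [hmain]
        _ = 1 / (τ * (c * (lam * X) ^ (c - 1))) := by
            rw [div_div]
  -- the filtered set is contained in a union of small boxes
  set S := ((Finset.Icc 1 N ×ˢ Finset.Icc 1 N).filter (fun p : ℕ × ℕ =>
          lam * X < p.1 ∧ (p.1 : ℝ) ≤ X ∧ lam * X < p.2 ∧ (p.2 : ℝ) ≤ X ∧
          |(p.1 : ℝ) ^ c - (p.2 : ℝ) ^ c| ≤ 1 / τ)) with hSdef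
  have hsub : S ⊆ (Finset.Icc 1 N).biUnion
      (fun n => ({n} : Finset ℕ) ×ˢ Finset.Icc (n - K) (n + K)) := by
    intro p hp
    rw [hSdef, Finset.mem_filter, Finset.mem_product] at hp
    obtain ⟨⟨hp1, hp2⟩, h1, h2, h3, h4, h5⟩ := hp
    rw [Finset.mem_biUnion]
    refine ⟨p.1, hp1, ?_⟩
    rw [Finset.mem_product, Finset.mem_singleton, Finset.mem_Icc]
    have habs' : |(p.2 : ℝ) ^ c - (p.1 : ℝ) ^ c| ≤ 1 / τ := by
      rw [abs_sub_comm]; exact h5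
    have d1 : (p.1 : ℝ) - p.2 ≤ L := key p.1 p.2 h1 h2 h3 h4 h5
    have d2 : (p.2 : ℝ) - p.1 ≤ L := key p.2 p.1 h3 h4 h1 h2 habs'
    refine ⟨rfl, ?_, ?_⟩
    · -- p.1 - K ≤ p.2
      rcases le_or_gt p.1 p.2 with h | h
      · omega
      · have : ((p.1 - p.2 : ℕ) : ℝ) ≤ L := by
          rw [Nat.cast_sub h.le]; exact d1
        have h6 := Nat.le_floor this
        rw [← hKdef] at h6
        omega
    · rcases le_or_gt p.2 p.1 with h | h
      · omega
      · have : ((p.2 - p.1 : ℕ) : ℝ) ≤ L := by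
          rw [Nat.cast_sub h.le]; exact d2
        have h6 := Nat.le_floor this
        rw [← hKdef] at h6
        omega
  have hcard : S.card ≤ N * (2 * K + 1) := by
    calc S.card ≤ ((Finset.Icc 1 N).biUnion
        (fun n => ({n} : Finset ℕ) ×ˢ Finset.Icc (n - K) (n + K))).card :=
          Finset.card_le_card hsub
      _ ≤ ∑ n ∈ Finset.Icc 1 N, (({n} : Finset ℕ) ×ˢ Finset.Icc (n - K) (n + K)).card :=
          Finset.card_biUnion_le
      _ ≤ ∑ n ∈ Finset.Icc 1 N, (2 * K + 1) := by
          apply Finset.sum_le_sum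
          intro n _
          rw [Finset.card_product, Finset.card_singleton, one_mul, Nat.card_Icc]
          omega
      _ ≤ N * (2 * K + 1) := by
          rw [Finset.sum_const, smul_eq_mul]
          exact Nat.mul_le_mul_right _ (by simp [Nat.card_Icc])
  -- pass to reals
  have hNX : (N : ℝ) ≤ X := by rw [hNdef]; exact Nat.floor_le hX0.le
  have hKL : (K : ℝ) ≤ L := by rw [hKdef]; exact Nat.floor_le hL0.le
  have hr1 : (S.card : ℝ) ≤ X * (2 * L + 1) := by
    calc (S.card : ℝ) ≤ (N : ℝ) * (2 * K + 1) := by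
          exact_mod_cast Nat.cast_le.mpr hcard
      _ ≤ X * (2 * L + 1) := by
          apply mul_le_mul hNX (by linarith) (by positivity) hX0.le
  -- compute the right-hand side
  have hsplit : (lam * X) ^ (c - 1) = lam ^ (c - 1) * X ^ (c - 1) :=
    Real.mul_rpow hlam0.le hX0.le
  have hXp : (0:ℝ) < X ^ (c - 1) := Real.rpow_pos_of_pos hX0 _
  have hX2c : X ^ (2 - c) = X / X ^ (c - 1) := by
    rw [show (2 - c) = 1 - (c - 1) by ring, Real.rpow_sub hX0, Real.rpow_one]
  have heq : 2 * L * X = 2 / (c * lam ^ (c - 1)) * (τ⁻¹ * X ^ (2 - c)) := by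
    rw [hLdef, hsplit, hX2c]
    field_simp
  have hfinal : X * (2 * L + 1) ≤ (1 + 2 / (c * lam ^ (c - 1))) * (X + τ⁻¹ * X ^ (2 - c)) := by
    have h1 : X * (2 * L + 1) = X + 2 * L * X := by ring
    have h2 : (0:ℝ) ≤ τ⁻¹ * X ^ (2 - c) := by positivity
    have h3 : (0:ℝ) ≤ 2 / (c * lam ^ (c - 1)) := by positivity
    rw [h1, heq]
    nlinarith [h2, h3, hX0.le]
  calc (S.card : ℝ) ≤ X * (2 * L + 1) := hr1
    _ ≤ (1 + 2 / (c * lam ^ (c - 1))) * (X + τ⁻¹ * X ^ (2 - c)) := hfinal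
end

section
/- Let c > 1, X ≥ 2, 0 < λ < 1, and let ℓ ≥ 1/τ₁ with τ₁ ≤ 1. Then the sum of 1/|n₁^c - n₂^c| over integer pairs λX < n₁, n₂ ≤ X with ℓ < |n₁^c - n₂^c| ≤ 2ℓ is O(X^{2-c}), with implied constant depending only on c and λ. -/
open Real Finset

lemma slope_key (c : ℝ) (hc : 1 < c) {a b : ℝ} (ha : 0 < a) (hab : a ≤ b) :
    a ^ (c - 1) * (b - a) ≤ b ^ c - a ^ c := by
  rcases eq_or_lt_of_le hab with rfl | hab'
  · simp
  · have hconv : ConvexOn ℝ (Set.Ici 0) fun x : ℝ => x ^ c := convexOn_rpow hc.le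
    have h := hconv.slope_mono_adjacent (x := 0) (y := a) (z := b)
      (Set.mem_Ici.2 le_rfl) (Set.mem_Ici.2 (le_of_lt (lt_trans ha hab'))) ha hab'
    simp only [Real.zero_rpow (by positivity : c ≠ 0), sub_zero] at h
    have h2 : a ^ (c - 1) ≤ (b ^ c - a ^ c) / (b - a) := by
      rwa [Real.rpow_sub_one ha.ne' c]
    calc a ^ (c - 1) * (b - a) ≤ (b ^ c - a ^ c) / (b - a) * (b - a) := by
          apply mul_le_mul_of_nonneg_right h2 (by linarith)
      _ = b ^ c - a ^ c := div_mul_cancel₀ _ (by linarith)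

lemma diff_lower (c : ℝ) (hc : 1 < c) {t m n : ℝ} (ht : 0 < t) (hm : t ≤ m) (hn : t ≤ n) :
    t ^ (c - 1) * |n - m| ≤ |n ^ c - m ^ c| := by
  rcases le_total m n with h | h
  · have h1 := slope_key c hc (lt_of_lt_of_le ht hm) h
    have h2 : t ^ (c - 1) * (n - m) ≤ m ^ (c - 1) * (n - m) := by
      apply mul_le_mul_of_nonneg_right _ (by linarith)
      exact Real.rpow_le_rpow ht.le hm (by linarith)
    rw [abs_of_nonneg (by linarith : (0:ℝ) ≤ n - m),
        abs_of_nonneg (le_trans (mul_nonneg (Real.rpow_nonneg (by linarith) _) (by linarith)) h1)]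
    linarith
  · have h1 := slope_key c hc (lt_of_lt_of_le ht hn) h
    have h2 : t ^ (c - 1) * (m - n) ≤ n ^ (c - 1) * (m - n) := by
      apply mul_le_mul_of_nonneg_right _ (by linarith)
      exact Real.rpow_le_rpow ht.le hn (by linarith)
    rw [abs_of_nonpos (by linarith : n - m ≤ (0:ℝ)),
        abs_of_nonpos (by nlinarith [le_trans (mul_nonneg (Real.rpow_nonneg (by linarith : (0:ℝ) ≤ n) (c-1)) (by linarith : (0:ℝ) ≤ m - n)) h1] : n ^ c - m ^ c ≤ (0:ℝ))]
    linarith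

theorem sum_reciprocal_power_gaps (c lam : ℝ) (hc : 1 < c) (hlam0 : 0 < lam) (hlam1 : lam < 1) :
    ∃ C : ℝ, 0 < C ∧ ∀ X τ₁ ℓ : ℝ, 2 ≤ X → 0 < τ₁ → τ₁ ≤ 1 → 1 / τ₁ ≤ ℓ →
      ∑ p ∈ (Finset.Icc 1 ⌊X⌋₊ ×ˢ Finset.Icc 1 ⌊X⌋₊).filter (fun p : ℕ × ℕ =>
          lam * X < p.1 ∧ (p.1 : ℝ) ≤ X ∧ lam * X < p.2 ∧ (p.2 : ℝ) ≤ X ∧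
          ℓ < |(p.1 : ℝ) ^ c - (p.2 : ℝ) ^ c| ∧ |(p.1 : ℝ) ^ c - (p.2 : ℝ) ^ c| ≤ 2 * ℓ),
        1 / |(p.1 : ℝ) ^ c - (p.2 : ℝ) ^ c|
        ≤ C * X ^ (2 - c) := by
  refine ⟨6 * lam ^ (1 - c), by positivity, ?_⟩
  intro X τ₁ ℓ hX hτ0 hτ1 hℓτ
  have hX0 : (0:ℝ) < X := by linarith
  have hℓ1 : (1:ℝ) ≤ ℓ := le_trans (by rw [le_div_iff₀ hτ0]; linarith) hℓτ
  have hℓ0 : (0:ℝ) < ℓ := by linarith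
  have hlX : (0:ℝ) < lam * X := by positivity
  set D := (lam * X) ^ (c - 1) with hD
  have hD0 : 0 < D := Real.rpow_pos_of_pos hlX _
  set N := ⌊X⌋₊ with hN
  set S := (Finset.Icc 1 N ×ˢ Finset.Icc 1 N).filter (fun p : ℕ × ℕ =>
      lam * X < p.1 ∧ (p.1 : ℝ) ≤ X ∧ lam * X < p.2 ∧ (p.2 : ℝ) ≤ X ∧
      ℓ < |(p.1 : ℝ) ^ c - (p.2 : ℝ) ^ c| ∧ |(p.1 : ℝ) ^ c - (p.2 : ℝ) ^ c| ≤ 2 * ℓ) with hSdef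
  have hRHS0 : (0:ℝ) ≤ 6 * lam ^ (1 - c) * X ^ (2 - c) := by positivity
  rcases S.eq_empty_or_nonempty with hS | ⟨q, hq⟩
  · rw [hS, Finset.sum_empty]; exact hRHS0
  have key : ∀ p : ℕ × ℕ, p ∈ S → D * |(p.1:ℝ) - (p.2:ℝ)| ≤ |(p.1 : ℝ) ^ c - (p.2 : ℝ) ^ c| := by
    intro p hp
    obtain ⟨-, h1, -, h3, -, -, -⟩ := Finset.mem_filter.1 hp
    exact diff_lower c hc hlX h3.le h1.le
  have hKD : D ≤ 2 * ℓ := by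
    obtain ⟨hmem, h1, h2, h3, h4, h5, h6⟩ := Finset.mem_filter.1 hq
    have hne : q.1 ≠ q.2 := by
      intro h; rw [h, sub_self, abs_zero] at h5; linarith
    have h1ab : (1:ℝ) ≤ |(q.1:ℝ) - q.2| := by
      have hz : ((q.1:ℤ) - (q.2:ℤ)) ≠ 0 := sub_ne_zero.2 (by exact_mod_cast hne)
      have := Int.one_le_abs hz
      have : ((1:ℤ):ℝ) ≤ ((|(q.1:ℤ) - (q.2:ℤ)|:ℤ):ℝ) := by exact_mod_cast this
      rwa [Int.cast_abs, Int.cast_one, Int.cast_sub, Int.cast_natCast, Int.cast_natCast] at this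
    calc D = D * 1 := (mul_one D).symm
      _ ≤ D * |(q.1:ℝ) - q.2| := mul_le_mul_of_nonneg_left h1ab hD0.le
      _ ≤ |(q.1 : ℝ) ^ c - (q.2 : ℝ) ^ c| := key q hq
      _ ≤ 2 * ℓ := h6
  set K := 2 * ℓ / D with hKdef
  have hK0 : (0:ℝ) < K := by positivity
  have hK1 : (1:ℝ) ≤ K := (one_le_div hD0).2 hKD
  set M := ⌊K⌋₊ with hM
  have hMK : (M:ℝ) ≤ K := Nat.floor_le hK0.le
  have hKM : K < M + 1 := Nat.lt_floor_add_one K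
  have hdist : ∀ p : ℕ × ℕ, p ∈ S → |(p.1:ℝ) - (p.2:ℝ)| ≤ K := by
    intro p hp
    have h := key p hp
    have h6 := (Finset.mem_filter.1 hp).2.2.2.2.2.2
    rw [hKdef, le_div_iff₀ hD0]
    calc |(p.1:ℝ) - p.2| * D = D * |(p.1:ℝ) - p.2| := mul_comm _ _
      _ ≤ |(p.1 : ℝ) ^ c - (p.2 : ℝ) ^ c| := h
      _ ≤ 2 * ℓ := h6
  have hsub : S ⊆ (Finset.Icc 1 N).biUnion (fun m => {m} ×ˢ Finset.Icc (m - M) (m + M)) := by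
    intro p hp
    have hmem := Finset.mem_product.1 (Finset.mem_filter.1 hp).1
    rw [Finset.mem_biUnion]
    refine ⟨p.1, hmem.1, ?_⟩
    rw [Finset.mem_product]
    refine ⟨Finset.mem_singleton_self _, ?_⟩
    have hd := hdist p hp
    rw [abs_le] at hd
    rw [Finset.mem_Icc]
    constructor
    · rw [Nat.sub_le_iff_le_add]
      have : (p.1:ℝ) < p.2 + M + 1 := by linarith
      have : p.1 < p.2 + M + 1 := by exact_mod_cast this
      omega
    · have : (p.2:ℝ) < p.1 + M + 1 := by linarith
      have : p.2 < p.1 + M + 1 := by exact_mod_cast this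
      omega
  have hcardNat : S.card ≤ N * (2 * M + 1) := by
    calc S.card ≤ ((Finset.Icc 1 N).biUnion (fun m => {m} ×ˢ Finset.Icc (m - M) (m + M))).card :=
          Finset.card_le_card hsub
      _ ≤ ∑ m ∈ Finset.Icc 1 N, ({m} ×ˢ Finset.Icc (m - M) (m + M)).card :=
          Finset.card_biUnion_le
      _ ≤ ∑ _m ∈ Finset.Icc 1 N, (2 * M + 1) := by
          apply Finset.sum_le_sum
          intro m _
          rw [Finset.card_product, Finset.card_singleton, one_mul, Nat.card_Icc]
          omega
      _ = (Finset.Icc 1 N).card * (2 * M + 1) := by rw [Finset.sum_const, smul_eq_mul]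
      _ ≤ N * (2 * M + 1) := by
          apply Nat.mul_le_mul_right
          rw [Nat.card_Icc]; omega
  have hsum1 : ∑ p ∈ S, 1 / |(p.1 : ℝ) ^ c - (p.2 : ℝ) ^ c| ≤ (S.card : ℝ) * (1 / ℓ) := by
    rw [← nsmul_eq_mul]
    apply Finset.sum_le_card_nsmul
    intro p hp
    have h5 := (Finset.mem_filter.1 hp).2.2.2.2.2.1
    exact one_div_le_one_div_of_le hℓ0 h5.le
  have hNX : (N:ℝ) ≤ X := Nat.floor_le hX0.le
  have hcardR : (S.card : ℝ) ≤ X * (3 * K) := by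
    have h1 : (S.card : ℝ) ≤ (N:ℝ) * (2 * M + 1) := by exact_mod_cast hcardNat
    have h2 : (2 * (M:ℝ) + 1) ≤ 3 * K := by linarith
    have hN0 : (0:ℝ) ≤ (N:ℝ) := Nat.cast_nonneg _
    calc (S.card : ℝ) ≤ (N:ℝ) * (2 * M + 1) := h1
      _ ≤ X * (3 * K) := by nlinarith
  have hEq : X * (3 * K) * (1 / ℓ) = 6 * lam ^ (1 - c) * X ^ (2 - c) := by
    have e1 : D = lam ^ (c-1) * X ^ (c-1) := Real.mul_rpow hlam0.le hX0.le
    have e2 : lam ^ (1-c) * lam ^ (c-1) = 1 := by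
      rw [← Real.rpow_add hlam0]; norm_num
    have e3 : X ^ (2-c) * X ^ (c-1) = X := by
      rw [← Real.rpow_add hX0]; norm_num
    have hl0 : (0:ℝ) < lam ^ (c-1) := Real.rpow_pos_of_pos hlam0 _
    have hx0 : (0:ℝ) < X ^ (c-1) := Real.rpow_pos_of_pos hX0 _
    rw [hKdef, e1]
    field_simp
    linear_combination (-(6*(X^(2-c)*X^(c-1))))*e2 + (-6)*e3
  calc ∑ p ∈ S, 1 / |(p.1 : ℝ) ^ c - (p.2 : ℝ) ^ c| ≤ (S.card : ℝ) * (1 / ℓ) := hsum1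
    _ ≤ X * (3 * K) * (1 / ℓ) := by
        apply mul_le_mul_of_nonneg_right hcardR (by positivity)
    _ = 6 * lam ^ (1 - c) * X ^ (2 - c) := hEq
end

section
/- Let c > 1, 0 < λ < 1, X ≥ 2, and τ₁ ≤ X^{1-c}. Then for any real y, ∫_{-τ₁}^{τ₁} |S(x,y)|² dx ≪ X^{2-c} (log X)³, where S(x,y) = Σ_{λX < p ≤ X} (log p) e(p^c x + p^d y), the sum over primes p, and the implied constant depends only on c, d, λ. -/
open Real Finset intervalIntegral

theorem osc_bound (β τ : ℝ) (hβ : β ≠ 0) :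
    ‖∫ x in (-τ)..τ, Complex.exp (Complex.I * β * x)‖ ≤ 2 / |β| := by
  have hIβ : (Complex.I * β) ≠ 0 := by
    simp [Complex.ext_iff, hβ]
  have key : ∀ x : ℝ, HasDerivAt (fun t : ℝ => Complex.exp (Complex.I * β * t) / (Complex.I * β))
      (Complex.exp (Complex.I * β * x)) x := by
    intro x
    have h1 : HasDerivAt (fun t : ℝ => Complex.I * β * t) (Complex.I * β) x := by
      simpa using ((hasDerivAt_id (x:ℂ)).const_mul (Complex.I * β)).comp_ofReal
    have h2 := (Complex.hasDerivAt_exp _).comp x h1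
    have := h2.div_const (Complex.I * β)
    simpa [mul_div_cancel_right₀ _ hIβ] using this
  rw [intervalIntegral.integral_eq_sub_of_hasDerivAt (fun x _ => key x)
    ((Continuous.intervalIntegrable (by continuity) _ _))]
  rw [div_sub_div_same, norm_div]
  have hb : ∀ t : ℝ, ‖Complex.exp (Complex.I * β * t)‖ ≤ 1 := by
    intro t
    rw [Complex.norm_exp]
    simp [Complex.mul_re]
  have h2 : ‖Complex.exp (Complex.I * ↑β * ↑τ) - Complex.exp (Complex.I * ↑β * ↑(-τ))‖ ≤ 2 := by
    calc _ ≤ _ := norm_sub_le _ _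
    _ ≤ 2 := by linarith [hb τ, hb (-τ)]
  have h3 : ‖Complex.I * (β:ℂ)‖ = |β| := by
    simp [norm_mul]
  rw [h3]
  gcongr

theorem rpow_gap {c m a b : ℝ} (hc : 1 < c) (hm : 0 < m) (hma : m ≤ a) (hab : a ≤ b) :
    c * m ^ (c - 1) * (b - a) ≤ b ^ c - a ^ c := by
  have hmono : MonotoneOn (fun t : ℝ => t ^ c - c * m ^ (c - 1) * t) (Set.Ici m) := by
    apply monotoneOn_of_deriv_nonneg (convex_Ici m)
    · apply ContinuousOn.sub
      · exact fun x hx => (Real.continuousAt_rpow_const x c (Or.inl (lt_of_lt_of_le hm hx).ne')).continuousWithinAt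
      · fun_prop
    · intro x hx
      rw [interior_Ici] at hx
      exact ((Real.hasDerivAt_rpow_const (p := c) (Or.inl (lt_of_lt_of_le hm hx.le).ne')).sub
        ((hasDerivAt_id x).const_mul (c * m ^ (c-1)))).differentiableAt.differentiableWithinAt
    · intro x hx
      rw [interior_Ici] at hx
      have hx0 : (0:ℝ) < x := lt_of_lt_of_le hm hx.le
      have hd : HasDerivAt (fun t : ℝ => t ^ c - c * m ^ (c - 1) * t)
          (c * x ^ (c-1) - c * m ^ (c-1)) x := by
        have h := (Real.hasDerivAt_rpow_const (p := c) (Or.inl hx0.ne')).sub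
          ((hasDerivAt_id x).const_mul (c * m ^ (c-1)))
        simp only [mul_one] at h
        exact h
      rw [hd.deriv]
      have : m ^ (c-1) ≤ x ^ (c-1) := Real.rpow_le_rpow hm.le hx.le (by linarith)
      nlinarith
  have := hmono (Set.mem_Ici.mpr hma) (Set.mem_Ici.mpr (hma.trans hab)) hab
  simp only at this
  nlinarith

theorem sum_inv_range (M : ℕ) : ∑ k ∈ Finset.range (M+1), (1:ℝ)/k = harmonic M := by
  induction M with
  | zero => simp
  | succ n ih => rw [Finset.sum_range_succ, ih]; push_cast [harmonic_succ]; ring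

theorem log_nat_mono {a b : ℕ} (h : a ≤ b) : Real.log a ≤ Real.log b := by
  rcases Nat.eq_zero_or_pos a with h0 | h0
  · subst h0; simp [Real.log_natCast_nonneg]
  · exact Real.log_le_log (by exact_mod_cast h0) (by exact_mod_cast h)

theorem dist_sum_bound (N p : ℕ) (hp : p ≤ N) :
    ∑ q ∈ Finset.range (N+1), (1:ℝ)/|(p:ℝ) - q| ≤ 2*(1 + Real.log N) := by
  rw [Finset.range_eq_Ico, ← Finset.sum_Ico_consecutive _ (Nat.zero_le p) (by omega)]
  have h1 : ∑ q ∈ Finset.Ico 0 p, (1:ℝ)/|(p:ℝ) - q| ≤ 1 + Real.log N := by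
    rw [← Finset.range_eq_Ico, ← Finset.sum_range_reflect]
    have : ∀ j ∈ Finset.range p, (1:ℝ)/|(p:ℝ) - ↑(p - 1 - j)| = 1/(j+1) := by
      intro j hj
      rw [Finset.mem_range] at hj
      have : ((p - 1 - j : ℕ) : ℝ) = (p : ℝ) - 1 - j := by
        push_cast [Nat.cast_sub (by omega : j ≤ p - 1), Nat.cast_sub (by omega : 1 ≤ p)]; ring
      rw [this]
      rw [show (p:ℝ) - ((p:ℝ) - 1 - j) = (j:ℝ)+1 by ring, abs_of_pos (by positivity)]
    rw [Finset.sum_congr rfl this]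
    have : ∑ j ∈ Finset.range p, (1:ℝ)/(j+1) = harmonic p := by
      simp only [harmonic, Rat.cast_sum, Rat.cast_inv, Rat.cast_natCast, one_div]
      push_cast
      rfl
    rw [this]
    calc ((harmonic p : ℝ)) ≤ 1 + Real.log p := harmonic_le_one_add_log p
      _ ≤ 1 + Real.log N := by linarith [log_nat_mono hp]
  have h2 : ∑ q ∈ Finset.Ico p (N+1), (1:ℝ)/|(p:ℝ) - q| ≤ 1 + Real.log N := by
    rw [Finset.sum_Ico_eq_sum_range]
    have : ∀ k ∈ Finset.range (N+1-p), (1:ℝ)/|(p:ℝ) - ↑(p + k)| = 1/k := by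
      intro k _
      push_cast
      rw [show (p:ℝ) - ((p:ℝ)+k) = -k by ring, abs_neg, abs_of_nonneg (by positivity)]
    rw [Finset.sum_congr rfl this, show N+1-p = (N-p)+1 by omega, sum_inv_range]
    calc ((harmonic (N-p) : ℝ)) ≤ 1 + Real.log (N-p : ℕ) := harmonic_le_one_add_log _
      _ ≤ 1 + Real.log N := by linarith [log_nat_mono (Nat.sub_le N p)]
  linarith

noncomputable def Bco (d y : ℝ) (p q : ℕ) : ℂ :=
  ((Real.log p * Real.log q : ℝ) : ℂ) *
    Complex.exp (2 * π * Complex.I * ((((p:ℝ)^d - (q:ℝ)^d) * y : ℝ) : ℂ))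

noncomputable def betaco (c : ℝ) (p q : ℕ) : ℝ := 2*π*((p:ℝ)^c - (q:ℝ)^c)

noncomputable def Eco (c : ℝ) (p q : ℕ) (x : ℝ) : ℂ :=
  Complex.exp (Complex.I * ((betaco c p q : ℝ) : ℂ) * (x:ℝ))

theorem Econt (c : ℝ) (p q : ℕ) : Continuous (Eco c p q) :=
  Complex.continuous_exp.comp (continuous_const.mul Complex.continuous_ofReal)

theorem Bnorm (d y : ℝ) (p q : ℕ) : ‖Bco d y p q‖ = |Real.log p * Real.log q| := by
  rw [Bco, norm_mul, Complex.norm_real, Real.norm_eq_abs,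
    Complex.norm_exp]
  have : (2 * (π:ℂ) * Complex.I * ((((p:ℝ)^d - (q:ℝ)^d) * y : ℝ) : ℂ)).re = 0 := by
    simp [Complex.mul_re, Complex.mul_im]
  rw [this, Real.exp_zero, mul_one]

theorem Enorm (c : ℝ) (p q : ℕ) (x : ℝ) : ‖Eco c p q x‖ = 1 := by
  rw [Eco, Complex.norm_exp]
  have : (Complex.I * ((betaco c p q : ℝ) : ℂ) * (x:ℝ)).re = 0 := by
    simp [Complex.mul_re, Complex.mul_im]
  rw [this, Real.exp_zero]

theorem prod_eq (c d y : ℝ) (p q : ℕ) (x : ℝ) :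
    ((Real.log p : ℂ) * Complex.exp (2 * π * Complex.I * (((p : ℝ) ^ c * x + (p : ℝ) ^ d * y : ℝ) : ℂ))) *
    (starRingEnd ℂ) ((Real.log q : ℂ) * Complex.exp (2 * π * Complex.I * (((q : ℝ) ^ c * x + (q : ℝ) ^ d * y : ℝ) : ℂ)))
    = Bco d y p q * Eco c p q x := by
  rw [Bco, Eco, betaco]
  rw [map_mul, ← Complex.exp_conj]
  rw [show (starRingEnd ℂ) (2 * π * Complex.I * (((q : ℝ) ^ c * x + (q : ℝ) ^ d * y : ℝ) : ℂ))
      = -(2 * π * Complex.I * (((q : ℝ) ^ c * x + (q : ℝ) ^ d * y : ℝ) : ℂ)) by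
    simp only [map_mul, Complex.conj_I, Complex.conj_ofReal, map_ofNat]; ring]
  rw [Complex.conj_ofReal]
  have hexp : (2 * (π:ℂ) * Complex.I * (((p : ℝ) ^ c * x + (p : ℝ) ^ d * y : ℝ) : ℂ))
      + -(2 * π * Complex.I * (((q : ℝ) ^ c * x + (q : ℝ) ^ d * y : ℝ) : ℂ))
      = (2 * π * Complex.I * ((((p:ℝ)^d - (q:ℝ)^d) * y : ℝ) : ℂ))
      + (Complex.I * ((2*π*((p:ℝ)^c - (q:ℝ)^c) : ℝ) : ℂ) * (x:ℝ)) := by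
    push_cast; ring
  rw [mul_mul_mul_comm, ← Complex.exp_add, hexp, Complex.exp_add]
  push_cast
  ring

set_option maxHeartbeats 3200000 in
theorem mean_value_near_origin (c d lam : ℝ) (hd : 1 < d) (hdc : d < c) (hlam0 : 0 < lam)
    (hlam1 : lam < 1) :
    ∃ C : ℝ, 0 < C ∧ ∀ X τ₁ : ℝ, 2 ≤ X → 0 < τ₁ → τ₁ ≤ X ^ (1 - c) → ∀ y : ℝ,
      (∫ x in (-τ₁)..τ₁,
        ‖∑ p ∈ (Finset.range (⌊X⌋₊ + 1)).filter
            (fun p : ℕ => p.Prime ∧ lam * X < (p : ℝ) ∧ (p : ℝ) ≤ X),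
          (Real.log p : ℂ) *
            Complex.exp (2 * π * Complex.I * (((p : ℝ) ^ c * x + (p : ℝ) ^ d * y : ℝ) : ℂ))‖ ^ 2)
      ≤ C * X ^ (2 - c) * Real.log X ^ 3 := by
  have hc : 1 < c := hd.trans hdc
  have hπ : (0:ℝ) < π := Real.pi_pos
  refine ⟨8 + 12 / (π * c * lam ^ (c-1)), by positivity, ?_⟩
  intro X τ₁ hX hτ hτX y
  have hX0 : (0:ℝ) < X := by linarith
  set N := ⌊X⌋₊ with hN
  set s := (Finset.range (N + 1)).filter
      (fun p : ℕ => p.Prime ∧ lam * X < (p : ℝ) ∧ (p : ℝ) ≤ X) with hs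
  set L := Real.log X with hLdef
  have hLhalf : (1/2:ℝ) ≤ L := by
    have h2 : Real.log 2 ≤ L := Real.log_le_log (by norm_num) hX
    have := Real.log_two_gt_d9
    linarith
  have hL0 : (0:ℝ) < L := by linarith
  have hNX : (N:ℝ) ≤ X := Nat.floor_le hX0.le
  have hlogN : Real.log N ≤ L := by
    rcases Nat.eq_zero_or_pos N with h0 | h0
    · rw [h0]; simp; linarith
    · exact Real.log_le_log (by exact_mod_cast h0) hNX
  have hmem : ∀ p ∈ s, (2:ℝ) ≤ (p:ℝ) ∧ lam * X < (p:ℝ) ∧ (p:ℝ) ≤ X ∧ p ≤ N := by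
    intro p hp
    rw [hs, Finset.mem_filter, Finset.mem_range] at hp
    exact ⟨by exact_mod_cast hp.2.1.two_le, hp.2.2.1, hp.2.2.2, by omega⟩
  have hlog_mem : ∀ p ∈ s, 0 ≤ Real.log p ∧ Real.log p ≤ L := by
    intro p hp
    obtain ⟨h2, _, hX', _⟩ := hmem p hp
    exact ⟨Real.log_nonneg (by linarith), Real.log_le_log (by linarith) hX'⟩
  set m : ℝ := lam * X with hm
  have hm0 : 0 < m := by positivity
  have hmc0 : (0:ℝ) < m ^ (c-1) := Real.rpow_pos_of_pos hm0 _
  -- Step 1: pointwise expansion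
  have hpoint : ∀ x : ℝ,
      ‖∑ p ∈ s, (Real.log p : ℂ) *
          Complex.exp (2 * π * Complex.I * (((p : ℝ) ^ c * x + (p : ℝ) ^ d * y : ℝ) : ℂ))‖ ^ 2
      = ∑ p ∈ s, ∑ q ∈ s, (Bco d y p q * Eco c p q x).re := by
    intro x
    have habs : ∀ z : ℂ, ‖z‖^2 = (z * (starRingEnd ℂ) z).re := by
      intro z
      rw [Complex.mul_conj, Complex.ofReal_re, Complex.sq_norm]
    rw [habs, map_sum, Finset.sum_mul_sum, Complex.re_sum]
    refine Finset.sum_congr rfl fun p _ => ?_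
    rw [Complex.re_sum]
    refine Finset.sum_congr rfl fun q _ => ?_
    rw [prod_eq c d y p q x]
  -- Step 2: exchange integral and sums
  have hstep2 : (∫ x in (-τ₁)..τ₁,
      ‖∑ p ∈ s, (Real.log p : ℂ) *
          Complex.exp (2 * π * Complex.I * (((p : ℝ) ^ c * x + (p : ℝ) ^ d * y : ℝ) : ℂ))‖ ^ 2)
      = ∑ p ∈ s, ∑ q ∈ s, (Bco d y p q * ∫ x in (-τ₁)..τ₁, Eco c p q x).re := by
    rw [intervalIntegral.integral_congr
      (g := fun x => ∑ p ∈ s, ∑ q ∈ s, (Bco d y p q * Eco c p q x).re)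
      (fun x _ => hpoint x)]
    rw [intervalIntegral.integral_finset_sum (fun p _ => ?_)]
    · refine Finset.sum_congr rfl fun p _ => ?_
      rw [intervalIntegral.integral_finset_sum (fun q _ => ?_)]
      · refine Finset.sum_congr rfl fun q _ => ?_
        have hInt : IntervalIntegrable (fun x => Bco d y p q * Eco c p q x)
            MeasureTheory.volume (-τ₁) τ₁ :=
          (continuous_const.mul (Econt c p q)).intervalIntegrable _ _
        have hcomm := Complex.reCLM.intervalIntegral_comp_comm hInt
        simp only [Complex.reCLM_apply] at hcomm
        rw [hcomm, intervalIntegral.integral_const_mul]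
      · exact ((Complex.continuous_re.comp
          (continuous_const.mul (Econt c p q))).intervalIntegrable _ _)
    · apply Continuous.intervalIntegrable
      exact continuous_finset_sum _ fun q _ =>
        (Complex.continuous_re.comp (continuous_const.mul (Econt c p q)))
  -- Step 3: bound each term by norms
  have hterm : ∀ p ∈ s, ∀ q ∈ s, (Bco d y p q * ∫ x in (-τ₁)..τ₁, Eco c p q x).re
      ≤ Real.log p * Real.log q * ‖∫ x in (-τ₁)..τ₁, Eco c p q x‖ := by
    intro p hp q hq
    calc (Bco d y p q * ∫ x in (-τ₁)..τ₁, Eco c p q x).re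
        ≤ ‖Bco d y p q * ∫ x in (-τ₁)..τ₁, Eco c p q x‖ := Complex.re_le_norm _
      _ = ‖Bco d y p q‖ * ‖∫ x in (-τ₁)..τ₁, Eco c p q x‖ := norm_mul _ _
      _ = Real.log p * Real.log q * ‖∫ x in (-τ₁)..τ₁, Eco c p q x‖ := by
          rw [Bnorm, abs_of_nonneg (mul_nonneg (hlog_mem p hp).1 (hlog_mem q hq).1)]
  -- diagonal bound
  have hdiag : ∀ p q : ℕ, ‖∫ x in (-τ₁)..τ₁, Eco c p q x‖ ≤ 2 * τ₁ := by
    intro p q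
    have := intervalIntegral.norm_integral_le_of_norm_le_const (C := 1) (a := -τ₁) (b := τ₁)
      (f := Eco c p q) (fun x _ => le_of_eq (Enorm c p q x))
    have h2 : |τ₁ - (-τ₁)| = 2 * τ₁ := by rw [abs_of_pos (by linarith)]; ring
    rw [h2, one_mul] at this
    exact this
  -- off-diagonal bound
  have hoff : ∀ p ∈ s, ∀ q ∈ s, p ≠ q → ‖∫ x in (-τ₁)..τ₁, Eco c p q x‖
      ≤ (1 / (π * c * m ^ (c-1))) * (1 / |(p:ℝ) - (q:ℝ)|) := by
    intro p hp q hq hpq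
    obtain ⟨hp2, hpm, hpX, _⟩ := hmem p hp
    obtain ⟨hq2, hqm, hqX, _⟩ := hmem q hq
    have hΔ0 : (0:ℝ) < |(p:ℝ) - (q:ℝ)| := by
      rw [abs_pos, sub_ne_zero]
      exact_mod_cast hpq
    have hgap : c * m ^ (c-1) * |(p:ℝ) - (q:ℝ)| ≤ |(p:ℝ)^c - (q:ℝ)^c| := by
      rcases lt_or_gt_of_ne (show (p:ℝ) ≠ (q:ℝ) by exact_mod_cast hpq) with h | h
      · have hg := rpow_gap hc hm0 hpm.le h.le
        have hcm : (0:ℝ) ≤ c * m ^ (c-1) * ((q:ℝ) - p) :=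
          (mul_pos (mul_pos (by linarith : (0:ℝ) < c) hmc0) (sub_pos.mpr h)).le
        rw [abs_sub_comm ((p:ℝ)) ((q:ℝ)), abs_of_nonneg (by linarith),
          abs_sub_comm ((p:ℝ)^c) _, abs_of_nonneg (by linarith)]
        linarith
      · have hg := rpow_gap hc hm0 hqm.le h.le
        have hcm : (0:ℝ) ≤ c * m ^ (c-1) * ((p:ℝ) - q) :=
          (mul_pos (mul_pos (by linarith : (0:ℝ) < c) hmc0) (sub_pos.mpr h)).le
        rw [abs_of_nonneg (by linarith), abs_of_nonneg (by linarith)]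
        linarith
    have habs : (0:ℝ) < |(p:ℝ)^c - (q:ℝ)^c| :=
      lt_of_lt_of_le (mul_pos (mul_pos (by linarith : (0:ℝ) < c) hmc0) hΔ0) hgap
    have hβne : betaco c p q ≠ 0 := by
      rw [betaco]
      have hne : (p:ℝ)^c - (q:ℝ)^c ≠ 0 := by
        intro h
        rw [h, abs_zero] at habs
        exact lt_irrefl 0 habs
      exact mul_ne_zero (by positivity) hne
    have h1 : ‖∫ x in (-τ₁)..τ₁, Eco c p q x‖ ≤ 2 / |betaco c p q| :=
      osc_bound (betaco c p q) τ₁ hβne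
    refine h1.trans ?_
    have hβabs : |betaco c p q| = 2*π*|(p:ℝ)^c - (q:ℝ)^c| := by
      rw [betaco, abs_mul, abs_of_pos (by positivity : (0:ℝ) < 2*π)]
    have hlow : 2*π*(c * m ^ (c-1) * |(p:ℝ) - (q:ℝ)|) ≤ |betaco c p q| := by
      rw [hβabs]
      nlinarith
    have hlow0 : (0:ℝ) < 2*π*(c * m ^ (c-1) * |(p:ℝ) - (q:ℝ)|) := by positivity
    calc 2 / |betaco c p q| ≤ 2 / (2*π*(c * m ^ (c-1) * |(p:ℝ) - (q:ℝ)|)) := by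
          gcongr
      _ = (1 / (π * c * m ^ (c-1))) * (1 / |(p:ℝ) - (q:ℝ)|) := by
          field_simp
  -- sum over q for fixed p
  have hinner : ∀ p ∈ s, ∑ q ∈ s, Real.log p * Real.log q * ‖∫ x in (-τ₁)..τ₁, Eco c p q x‖
      ≤ L^2 * (2*τ₁) + L^2 * (1 / (π * c * m ^ (c-1))) * (2*(1 + Real.log N)) := by
    intro p hp
    rw [← Finset.add_sum_erase s _ hp]
    have hdterm : Real.log p * Real.log p * ‖∫ x in (-τ₁)..τ₁, Eco c p p x‖ ≤ L^2 * (2*τ₁) := by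
      have h1 := hdiag p p
      have h2 := (hlog_mem p hp).1
      have h3 := (hlog_mem p hp).2
      have : Real.log p * Real.log p ≤ L^2 := by nlinarith
      nlinarith [norm_nonneg (∫ x in (-τ₁)..τ₁, Eco c p p x)]
    have hoterm : ∑ q ∈ s.erase p, Real.log p * Real.log q * ‖∫ x in (-τ₁)..τ₁, Eco c p q x‖
        ≤ L^2 * (1 / (π * c * m ^ (c-1))) * (2*(1 + Real.log N)) := by
      have hstep : ∀ q ∈ s.erase p, Real.log p * Real.log q * ‖∫ x in (-τ₁)..τ₁, Eco c p q x‖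
          ≤ L^2 * (1 / (π * c * m ^ (c-1))) * (1 / |(p:ℝ) - (q:ℝ)|) := by
        intro q hq
        have hqs : q ∈ s := Finset.mem_of_mem_erase hq
        have hqp : q ≠ p := Finset.ne_of_mem_erase hq
        have h1 := hoff p hp q hqs (Ne.symm hqp)
        have h2 := (hlog_mem p hp)
        have h3 := (hlog_mem q hqs)
        have hlogs : Real.log p * Real.log q ≤ L^2 := by nlinarith [h2.1, h2.2, h3.1, h3.2]
        have hnn : (0:ℝ) ≤ Real.log p * Real.log q := mul_nonneg h2.1 h3.1
        calc Real.log p * Real.log q * ‖∫ x in (-τ₁)..τ₁, Eco c p q x‖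
            ≤ L^2 * ((1 / (π * c * m ^ (c-1))) * (1 / |(p:ℝ) - (q:ℝ)|)) :=
              mul_le_mul hlogs h1 (norm_nonneg _) (by positivity)
          _ = L^2 * (1 / (π * c * m ^ (c-1))) * (1 / |(p:ℝ) - (q:ℝ)|) := by ring
      calc ∑ q ∈ s.erase p, Real.log p * Real.log q * ‖∫ x in (-τ₁)..τ₁, Eco c p q x‖
          ≤ ∑ q ∈ s.erase p, L^2 * (1 / (π * c * m ^ (c-1))) * (1 / |(p:ℝ) - (q:ℝ)|) :=
            Finset.sum_le_sum hstep
        _ = L^2 * (1 / (π * c * m ^ (c-1))) * ∑ q ∈ s.erase p, (1 / |(p:ℝ) - (q:ℝ)|) := by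
            rw [Finset.mul_sum]
        _ ≤ L^2 * (1 / (π * c * m ^ (c-1))) * (2*(1 + Real.log N)) := by
            have hsub : s.erase p ⊆ Finset.range (N+1) := by
              intro q hq
              have h := Finset.mem_of_mem_erase hq
              rw [hs, Finset.mem_filter] at h
              exact h.1
            have hsum1 : ∑ q ∈ s.erase p, (1:ℝ) / |(p:ℝ) - (q:ℝ)|
                ≤ ∑ q ∈ Finset.range (N+1), (1:ℝ) / |(p:ℝ) - (q:ℝ)| :=
              Finset.sum_le_sum_of_subset_of_nonneg hsub (fun q _ _ => by positivity)
            have hsum2 := dist_sum_bound N p (hmem p hp).2.2.2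
            have hpos : (0:ℝ) ≤ L^2 * (1 / (π * c * m ^ (c-1))) := by positivity
            exact mul_le_mul_of_nonneg_left (hsum1.trans hsum2) hpos
    linarith
  -- assemble
  rw [hstep2]
  have htotal : ∑ p ∈ s, ∑ q ∈ s, (Bco d y p q * ∫ x in (-τ₁)..τ₁, Eco c p q x).re
      ≤ (s.card : ℝ) * (L^2 * (2*τ₁) + L^2 * (1 / (π * c * m ^ (c-1))) * (2*(1 + Real.log N))) := by
    have h1 : ∀ p ∈ s, ∑ q ∈ s, (Bco d y p q * ∫ x in (-τ₁)..τ₁, Eco c p q x).re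
        ≤ L^2 * (2*τ₁) + L^2 * (1 / (π * c * m ^ (c-1))) * (2*(1 + Real.log N)) := by
      intro p hp
      calc ∑ q ∈ s, (Bco d y p q * ∫ x in (-τ₁)..τ₁, Eco c p q x).re
          ≤ ∑ q ∈ s, Real.log p * Real.log q * ‖∫ x in (-τ₁)..τ₁, Eco c p q x‖ :=
            Finset.sum_le_sum (fun q hq => hterm p hp q hq)
        _ ≤ _ := hinner p hp
    calc ∑ p ∈ s, ∑ q ∈ s, (Bco d y p q * ∫ x in (-τ₁)..τ₁, Eco c p q x).re
        ≤ ∑ p ∈ s, (L^2 * (2*τ₁) + L^2 * (1 / (π * c * m ^ (c-1))) * (2*(1 + Real.log N))) :=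
          Finset.sum_le_sum h1
      _ = (s.card : ℝ) * _ := by rw [Finset.sum_const, nsmul_eq_mul]
  refine htotal.trans ?_
  -- final numeric bound
  have hcard : (s.card : ℝ) ≤ 2 * X := by
    have h1 : s.card ≤ N + 1 := by
      calc s.card ≤ (Finset.range (N+1)).card := Finset.card_le_card (Finset.filter_subset _ _)
        _ = N + 1 := Finset.card_range _
    calc (s.card : ℝ) ≤ (N:ℝ) + 1 := by exact_mod_cast h1
      _ ≤ X + 1 := by linarith
      _ ≤ 2 * X := by linarith
  have hmpow : m ^ (c-1) = lam ^ (c-1) * X ^ (c-1) := Real.mul_rpow hlam0.le hX0.le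
  have hX2c : X * X ^ (1-c) = X ^ (2-c) := by
    rw [show (2-c) = 1 + (1-c) by ring, Real.rpow_add hX0, Real.rpow_one]
  have h1logN : 1 + Real.log N ≤ 3 * L := by linarith
  have hXc0 : (0:ℝ) < X ^ (1-c) := Real.rpow_pos_of_pos hX0 _
  have hXc1 : (0:ℝ) < X ^ (c-1) := Real.rpow_pos_of_pos hX0 _
  have hlamc : (0:ℝ) < lam ^ (c-1) := Real.rpow_pos_of_pos hlam0 _
  have hX2c0 : (0:ℝ) < X ^ (2-c) := Real.rpow_pos_of_pos hX0 _
  have hXinv : X ^ (1-c) = (X ^ (c-1))⁻¹ := by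
    rw [show (1-c) = -(c-1) by ring, Real.rpow_neg hX0.le]
  have hKX : (1 / (π * c * m ^ (c-1))) = (1 / (π * c * lam ^ (c-1))) * X ^ (1-c) := by
    rw [hmpow, hXinv]
    field_simp
  set A : ℝ := 1 / (π * c * lam ^ (c-1)) with hA
  have hA0 : (0:ℝ) < A := by rw [hA]; positivity
  calc (s.card : ℝ) * (L^2 * (2*τ₁) + L^2 * (1 / (π * c * m ^ (c-1))) * (2*(1 + Real.log N)))
      ≤ (2*X) * (L^2 * (2 * X ^ (1-c)) + L^2 * (A * X ^ (1-c)) * (2*(3*L))) := by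
        apply mul_le_mul hcard ?_ ?_ (by positivity)
        · rw [hKX]
          have t1 : L^2 * (2*τ₁) ≤ L^2 * (2 * X ^ (1-c)) := by nlinarith
          have t2 : L^2 * (A * X ^ (1-c)) * (2*(1 + Real.log N))
              ≤ L^2 * (A * X ^ (1-c)) * (2*(3*L)) := by
            have hge : (0:ℝ) ≤ L^2 * (A * X ^ (1-c)) := by positivity
            nlinarith
          linarith
        · positivity
      _ = 4 * (X * X^(1-c)) * L^2 + 12 * A * (X * X^(1-c)) * L^3 := by ring
      _ = 4 * X^(2-c) * L^2 + 12 * A * X^(2-c) * L^3 := by rw [hX2c]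
      _ ≤ 8 * X^(2-c) * L^3 + 12 * A * X^(2-c) * L^3 := by
          have hLL : L^2 ≤ 2 * L^3 := by nlinarith
          have hk := mul_le_mul_of_nonneg_left hLL (by positivity : (0:ℝ) ≤ 4 * X^(2-c))
          linarith
      _ = (8 + 12 / (π * c * lam ^ (c-1))) * X ^ (2-c) * L^3 := by rw [hA]; ring
end

section
/- Let f : [N, 2N] → ℝ be differentiable with |f(x)| ≤ P and |f'(x)| ≥ Δ > 0 for all x ∈ [N, 2N]. Then Σ_{N < n ≤ 2N} min(D, 1/‖f(n)‖) ≪ (P + 1)(D + Δ^{-1}) log(2 + Δ^{-1}), where ‖t‖ denotes the distance from t to the nearest integer. -/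
open Real Finset Set


-- harmonic bound
lemma harm_aux (n : ℕ) : ∑ j ∈ Finset.range n, (1:ℝ)/(j+1) ≤ 1 + Real.log n := by
  induction n with
  | zero => simp
  | succ n ih =>
    rw [Finset.sum_range_succ]
    rcases Nat.eq_zero_or_pos n with h | h
    · subst h; simp
    · have hn : (0:ℝ) < n := by exact_mod_cast h
      have h1 : (1:ℝ)/((n:ℝ)+1) ≤ Real.log ((n:ℝ)+1) - Real.log n := by
        have h2 := Real.log_le_sub_one_of_pos (show (0:ℝ) < (n:ℝ)/((n:ℝ)+1) by positivity)
        rw [Real.log_div (ne_of_gt hn) (by positivity)] at h2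
        have h3 : (n:ℝ)/((n:ℝ)+1) - 1 = -(1/((n:ℝ)+1)) := by field_simp; ring
        linarith [h2, h3.le, h3.ge]
      push_cast
      linarith

lemma ceil_eq_abs_sub_lt {a b : ℝ} (ha : 0 ≤ a) (hb : 0 ≤ b) (h : ⌈a⌉₊ = ⌈b⌉₊) : |a - b| < 1 := by
  rcases Nat.eq_zero_or_pos ⌈a⌉₊ with h0 | h0
  · have ha0 : a ≤ 0 := by
      by_contra hc; push_neg at hc
      exact absurd h0 (by positivity)
    have hb0 : b ≤ 0 := by
      by_contra hc; push_neg at hc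
      rw [h] at h0; exact absurd h0 (by positivity)
    have : a = 0 := le_antisymm ha0 ha
    have : b = 0 := le_antisymm hb0 hb
    simp_all
  · have h1 : a ≤ ⌈a⌉₊ := Nat.le_ceil a
    have h2 : b ≤ ⌈b⌉₊ := Nat.le_ceil b
    have h3 : ((⌈a⌉₊ - 1 : ℕ) : ℝ) < a := by
      rw [← Nat.lt_ceil]; omega
    have h4 : ((⌈b⌉₊ - 1 : ℕ) : ℝ) < b := by
      rw [← Nat.lt_ceil]; rw [← h]; omega
    have h5 : (1:ℕ) ≤ ⌈a⌉₊ := h0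
    have h6 : (1:ℕ) ≤ ⌈b⌉₊ := by omega
    rw [h] at h1 h3
    have hc1 : ((⌈b⌉₊ - 1 : ℕ):ℝ) = (⌈b⌉₊:ℝ) - 1 := by push_cast [h6]; ring
    rw [hc1] at h3 h4
    rw [abs_lt]; constructor <;> linarith


lemma shifted_harm (Δ : ℝ) (hΔ : 0 < Δ) (K : ℕ) :
    ∑ k ∈ Finset.range (K+1), (if k ≤ 1 then (0:ℝ) else (Δ*((k:ℝ)-1))⁻¹)
      ≤ Δ⁻¹ * (1 + Real.log K) := by
  rcases K with _ | K'
  · simp; positivity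
  · rw [Finset.sum_range_succ', Finset.sum_range_succ']
    have he : ∀ i : ℕ, (if i+1+1 ≤ 1 then (0:ℝ) else (Δ*(((i+1+1:ℕ):ℝ)-1))⁻¹)
        = Δ⁻¹ * (1/((i:ℝ)+1)) := by
      intro i
      rw [if_neg (by omega)]
      push_cast
      rw [mul_inv, mul_one_div, ← one_div]
      ring_nf
    simp only [he]
    norm_num
    rw [← Finset.mul_sum]
    have h1 := harm_aux K'
    have hlog : Real.log K' ≤ Real.log ((K':ℝ)+1) := by
      rcases Nat.eq_zero_or_pos K' with h | h
      · subst h; simp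
      · apply Real.log_le_log (by exact_mod_cast h); push_cast; linarith
    have hinv : (0:ℝ) ≤ Δ⁻¹ := by positivity
    push_cast
    simp only [one_div] at h1
    calc Δ⁻¹ * (∑ i ∈ Finset.range K', ((i:ℝ)+1)⁻¹)
        ≤ Δ⁻¹ * (1 + Real.log K') := mul_le_mul_of_nonneg_left h1 hinv
      _ ≤ Δ⁻¹ * (1 + Real.log ((K':ℝ)+1)) := by
          apply mul_le_mul_of_nonneg_left _ hinv; linarith


set_option maxHeartbeats 1000000 in
theorem min_over_fractional_parts :
    ∃ C : ℝ, 0 < C ∧ ∀ (N : ℕ) (f : ℝ → ℝ) (P D Δ : ℝ), 1 ≤ N → 0 < P → 0 < D → 0 < Δ →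
      (∀ x ∈ Set.Icc (N : ℝ) (2 * N), DifferentiableAt ℝ f x) →
      (∀ x ∈ Set.Icc (N : ℝ) (2 * N), |f x| ≤ P) →
      (∀ x ∈ Set.Icc (N : ℝ) (2 * N), Δ ≤ |deriv f x|) →
      ∑ n ∈ Finset.Ioc N (2 * N), min D (1 / |f n - round (f n)|) ≤
        C * (P + 1) * (D + Δ⁻¹) * Real.log (2 + Δ⁻¹) := by
  classical
  refine ⟨100, by norm_num, ?_⟩
  intro N f P D Δ hN hP hD hΔ hdiff hbound hderiv
  have hΔinv : (0:ℝ) < Δ⁻¹ := inv_pos.mpr hΔ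
  set L := Real.log (2 + Δ⁻¹) with hLdef
  have hL2 : Real.log 2 ≤ L := Real.log_le_log (by norm_num) (by linarith)
  have hLhalf : (1/2 : ℝ) ≤ L := by
    nlinarith [Real.log_two_gt_d9]
  -- membership of integers in the real interval
  have hmem : ∀ n ∈ Finset.Ioc N (2*N), (n:ℝ) ∈ Set.Icc (N:ℝ) (2*N) := by
    intro n hn
    simp only [Finset.mem_Ioc] at hn
    constructor
    · exact_mod_cast hn.1.le
    · push_cast; exact_mod_cast hn.2
  -- spacing via MVT
  have key : ∀ n ∈ Finset.Ioc N (2*N), ∀ n' ∈ Finset.Ioc N (2*N), n < n' → Δ ≤ |f n' - f n| := by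
    intro n hn n' hn' hlt
    have h1 := hmem n hn
    have h2 := hmem n' hn'
    have hsub : Set.Icc (n:ℝ) (n':ℝ) ⊆ Set.Icc (N:ℝ) (2*N) :=
      Set.Icc_subset_Icc h1.1 h2.2
    have hcont : ContinuousOn f (Set.Icc (n:ℝ) n') := fun x hx =>
      ((hdiff x (hsub hx)).continuousAt).continuousWithinAt
    have hdiff' : DifferentiableOn ℝ f (Set.Ioo (n:ℝ) n') := fun x hx =>
      (hdiff x (hsub (Set.Ioo_subset_Icc_self hx))).differentiableWithinAt
    have hlt' : (n:ℝ) < n' := by exact_mod_cast hlt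
    obtain ⟨c, hc, hc2⟩ := exists_deriv_eq_slope f hlt' hcont hdiff'
    have hcmem : c ∈ Set.Icc (N:ℝ) (2*N) := hsub (Set.Ioo_subset_Icc_self hc)
    have hder : Δ ≤ |deriv f c| := hderiv c hcmem
    rw [hc2, abs_div] at hder
    have hd : (1:ℝ) ≤ (n':ℝ) - n := by
      have : n + 1 ≤ n' := hlt
      have : ((n:ℝ)+1) ≤ n' := by exact_mod_cast this
      linarith
    have habs : |(n':ℝ) - n| = (n':ℝ) - n := abs_of_pos (by linarith)
    rw [habs] at hder
    calc Δ ≤ |f n' - f n| / ((n':ℝ) - n) := hder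
      _ ≤ |f n' - f n| := div_le_self (abs_nonneg _) hd
  set v : ℕ → ℝ := fun n => f n - round (f n) with hvdef
  set g : ℕ → ℤ × Bool × ℕ := fun n => (round (f n), (decide (0 ≤ v n), ⌈|v n|/Δ⌉₊)) with hgdef
  have hinj : Set.InjOn g (Finset.Ioc N (2*N)) := by
    intro a ha b hb hab
    by_contra hne
    have hspace : Δ ≤ |f a - f b| := by
      rcases lt_or_gt_of_ne hne with h | h
      · rw [abs_sub_comm]; exact key a (by exact_mod_cast ha) b (by exact_mod_cast hb) h
      · exact key b (by exact_mod_cast hb) a (by exact_mod_cast ha) h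
    have h1 : round (f a) = round (f b) := congrArg Prod.fst hab
    have h2 : decide (0 ≤ v a) = decide (0 ≤ v b) := congrArg (fun p => p.2.1) hab
    have h3 : ⌈|v a|/Δ⌉₊ = ⌈|v b|/Δ⌉₊ := congrArg (fun p => p.2.2) hab
    have h4 : |(|v a|/Δ - |v b|/Δ)| < 1 :=
      ceil_eq_abs_sub_lt (by positivity) (by positivity) h3
    have h5 : |(|v a| - |v b|)| < Δ := by
      have : |v a|/Δ - |v b|/Δ = (|v a| - |v b|)/Δ := by ring
      rw [this, abs_div, abs_of_pos hΔ, div_lt_one hΔ] at h4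
      exact h4
    have hsign : (0 ≤ v a ↔ 0 ≤ v b) := by
      constructor <;> intro h <;> [skip; skip] <;> simp_all [decide_eq_decide] 
    have h6 : |v a - v b| < Δ := by
      by_cases hva : 0 ≤ v a
      · have hvb : 0 ≤ v b := hsign.mp hva
        rwa [abs_of_nonneg hva, abs_of_nonneg hvb] at h5
      · have hvb : ¬ (0 ≤ v b) := fun h => hva (hsign.mpr h)
        push_neg at hva hvb
        rw [abs_of_neg hva, abs_of_neg hvb] at h5
        rw [show v a - v b = -(-v a - -v b) by ring, abs_neg]
        exact h5
    have h7 : f a - f b = v a - v b := by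
      simp only [hvdef]
      rw [h1]; ring
    rw [h7] at hspace
    linarith [h6, hspace]
  set ψ : ℕ → ℝ := fun k => if k ≤ 1 then D else (Δ*((k:ℝ)-1))⁻¹ with hψdef
  have hψnn : ∀ k, 0 ≤ ψ k := by
    intro k
    simp only [hψdef]
    split
    · exact hD.le
    · next h =>
      have h2 : (2:ℝ) ≤ k := by exact_mod_cast (by omega : 2 ≤ k)
      have h3 : (0:ℝ) < Δ*((k:ℝ)-1) := mul_pos hΔ (by linarith)
      exact (inv_pos.mpr h3).le
  have hpt : ∀ n ∈ Finset.Ioc N (2*N), min D (1/|f n - round (f n)|) ≤ ψ (g n).2.2 := by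
    intro n hn
    show min D (1/|f ↑n - round (f ↑n)|) ≤ ψ ⌈|v n|/Δ⌉₊
    have hveq : f ↑n - round (f ↑n) = v n := rfl
    rw [hveq]
    by_cases hk : ⌈|v n|/Δ⌉₊ ≤ 1
    · simp only [hψdef, if_pos hk]; exact min_le_left _ _
    · simp only [hψdef, if_neg hk]
      push_neg at hk
      have h1 : ((⌈|v n|/Δ⌉₊ - 1 : ℕ) : ℝ) < |v n|/Δ := by
        rw [← Nat.lt_ceil]; omega
      have hc : ((⌈|v n|/Δ⌉₊ - 1 : ℕ) : ℝ) = (⌈|v n|/Δ⌉₊:ℝ) - 1 := by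
        push_cast [Nat.one_le_iff_ne_zero.mpr (by omega : ⌈|v n|/Δ⌉₊ ≠ 0)]; ring
      rw [hc] at h1
      have h2 : (1:ℝ) ≤ (⌈|v n|/Δ⌉₊:ℝ) - 1 := by
        have : (2:ℝ) ≤ (⌈|v n|/Δ⌉₊:ℝ) := by exact_mod_cast hk
        linarith
      have h3 : Δ * ((⌈|v n|/Δ⌉₊:ℝ) - 1) < |v n| := by
        rw [lt_div_iff₀ hΔ] at h1; linarith [h1]
      have h4 : (0:ℝ) < Δ * ((⌈|v n|/Δ⌉₊:ℝ) - 1) := by positivity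
      calc min D (1/|v n|) ≤ 1/|v n| := min_le_right _ _
        _ ≤ (Δ * ((⌈|v n|/Δ⌉₊:ℝ) - 1))⁻¹ := by
            rw [one_div]
            exact inv_anti₀ h4 h3.le
  set M : ℤ := ⌈P⌉ + 1 with hMdef
  set K : ℕ := ⌈1/(2*Δ)⌉₊ with hKdef
  set box : Finset (ℤ × Bool × ℕ) :=
    (Finset.Icc (-M) M) ×ˢ ((Finset.univ : Finset Bool) ×ˢ Finset.range (K+1)) with hboxdef
  have hmaps : ∀ n ∈ Finset.Ioc N (2*N), g n ∈ box := by
    intro n hn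
    simp only [hboxdef, Finset.mem_product, Finset.mem_Icc, Finset.mem_univ, Finset.mem_range,
      true_and]
    refine ⟨?_, ?_⟩
    · -- round bound
      have hb := hbound _ (hmem n hn)
      have hr : |(round (f ↑n) : ℝ)| ≤ P + 1/2 := by
        have := abs_sub_round (f ↑n)
        calc |(round (f ↑n) : ℝ)| = |f ↑n - (f ↑n - round (f ↑n))| := by ring_nf
          _ ≤ |f ↑n| + |f ↑n - round (f ↑n)| := abs_sub _ _
          _ ≤ P + 1/2 := add_le_add hb this
      have hM : (|round (f ↑n)| : ℝ) ≤ (M:ℝ) := by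
        push_cast
        rw [hMdef]
        calc (|(round (f ↑n):ℝ)|) ≤ P + 1/2 := by exact_mod_cast hr
          _ ≤ (⌈P⌉:ℝ) + 1 := by push_cast; linarith [Int.le_ceil P]
          _ = ((⌈P⌉+1 : ℤ):ℝ) := by push_cast; ring
      have : |round (f ↑n)| ≤ M := by exact_mod_cast hM
      exact abs_le.mp this
    · -- ceil bound
      have hv2 : |v n| ≤ 1/2 := abs_sub_round (f ↑n)
      have : |v n|/Δ ≤ 1/(2*Δ) := by
        rw [div_le_div_iff₀ hΔ (by positivity)]
        nlinarith
      have := Nat.ceil_le_ceil this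
      exact Nat.lt_succ_of_le this
  set T : ℝ := ∑ k ∈ Finset.range (K+1), ψ k with hTdef
  have hTnn : (0:ℝ) ≤ T := Finset.sum_nonneg fun k _ => hψnn k
  have hbox_sum : ∑ p ∈ box, ψ p.2.2 = ((Finset.Icc (-M) M).card : ℝ) * (2*T) := by
    rw [hboxdef, Finset.sum_product]
    have hin : ∀ m ∈ Finset.Icc (-M) M,
        (∑ q ∈ ((Finset.univ : Finset Bool) ×ˢ Finset.range (K+1)), ψ (m, q).2.2) = 2*T := by
      intro m _
      rw [Finset.sum_product]
      have hx : ∀ x : Bool, ∑ y ∈ Finset.range (K+1), ψ (m, x, y).2.2 = T := fun x => rfl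
      rw [Finset.sum_congr rfl (fun x _ => hx x), Finset.sum_const, Finset.card_univ]
      simp [two_mul]
    rw [Finset.sum_congr rfl hin, Finset.sum_const, nsmul_eq_mul]
  have hT : T ≤ 2*D + Δ⁻¹*(1 + Real.log K) := by
    have h1 : T = (∑ k ∈ Finset.range (K+1), (if k ≤ 1 then D else 0))
        + ∑ k ∈ Finset.range (K+1), (if k ≤ 1 then (0:ℝ) else (Δ*((k:ℝ)-1))⁻¹) := by
      rw [hTdef, ← Finset.sum_add_distrib]
      apply Finset.sum_congr rfl
      intro k _
      by_cases hk : k ≤ 1 <;> simp [hψdef, hk]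
    have h2 : (∑ k ∈ Finset.range (K+1), (if k ≤ 1 then D else (0:ℝ))) ≤ 2*D := by
      rw [← Finset.sum_filter, Finset.sum_const, nsmul_eq_mul]
      have hcard : (Finset.filter (fun k => k ≤ 1) (Finset.range (K+1))).card ≤ 2 := by
        have hsub : Finset.filter (fun k => k ≤ 1) (Finset.range (K+1)) ⊆ Finset.range 2 := by
          intro k hk
          simp only [Finset.mem_filter, Finset.mem_range] at hk ⊢
          omega
        calc _ ≤ (Finset.range 2).card := Finset.card_le_card hsub
          _ = 2 := by simp
      have : ((Finset.filter (fun k => k ≤ 1) (Finset.range (K+1))).card : ℝ) ≤ 2 := by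
        exact_mod_cast hcard
      exact mul_le_mul_of_nonneg_right this hD.le
    rw [h1]
    exact add_le_add h2 (shifted_harm Δ hΔ K)
  have hlogK : Real.log K ≤ L := by
    rcases Nat.eq_zero_or_pos K with h | h
    · rw [h]; simp; linarith
    · have ha : (K:ℝ) < 1/(2*Δ) + 1 := Nat.ceil_lt_add_one (by positivity)
      have hb : 1/(2*Δ) ≤ Δ⁻¹ := by
        rw [one_div, mul_inv]
        nlinarith
      have hc : (0:ℝ) < K := by exact_mod_cast h
      exact Real.log_le_log hc (by linarith)
  have hT' : T ≤ 2*D + Δ⁻¹*(1 + L) := by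
    have : Δ⁻¹*(1 + Real.log K) ≤ Δ⁻¹*(1 + L) := by
      apply mul_le_mul_of_nonneg_left _ hΔinv.le
      linarith
    linarith
  have hM1 : (1:ℤ) ≤ ⌈P⌉ := Int.ceil_pos.mpr hP
  have hcard : ((Finset.Icc (-M) M).card : ℝ) ≤ 5*(P+1) := by
    rw [Int.card_Icc]
    have hMnn : (0:ℤ) ≤ M + 1 - -M := by simp only [hMdef]; omega
    have h1 : (((M + 1 - -M).toNat : ℤ) : ℝ) = ((M + 1 - -M : ℤ) : ℝ) := by
      rw [Int.toNat_of_nonneg hMnn]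
    have h2 : (M:ℝ) ≤ P + 2 := by
      rw [hMdef]
      push_cast
      linarith [Int.ceil_lt_add_one P]
    push_cast at h1 ⊢
    rw [h1]
    push_cast
    linarith
  have hcardnn : (0:ℝ) ≤ ((Finset.Icc (-M) M).card : ℝ) := Nat.cast_nonneg _
  have hT8 : 2*T ≤ 8*L*(D+Δ⁻¹) := by
    have e1 : D ≤ 2*D*L := by
      have := mul_le_mul_of_nonneg_left hLhalf (by linarith : (0:ℝ) ≤ 2*D)
      linarith
    have e2 : Δ⁻¹ ≤ 2*Δ⁻¹*L := by
      have := mul_le_mul_of_nonneg_left hLhalf (by linarith : (0:ℝ) ≤ 2*Δ⁻¹)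
      linarith
    have e3 : (0:ℝ) ≤ Δ⁻¹*L := mul_nonneg hΔinv.le (by linarith)
    linarith [hT']
  calc ∑ n ∈ Finset.Ioc N (2*N), min D (1 / |f n - round (f n)|)
      ≤ ∑ n ∈ Finset.Ioc N (2*N), ψ (g n).2.2 := Finset.sum_le_sum hpt
    _ = ∑ p ∈ (Finset.Ioc N (2*N)).image g, ψ p.2.2 :=
        (Finset.sum_image (f := fun p => ψ p.2.2) fun x hx y hy h =>
          hinj (Finset.mem_coe.mpr hx) (Finset.mem_coe.mpr hy) h).symm
    _ ≤ ∑ p ∈ box, ψ p.2.2 :=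
        Finset.sum_le_sum_of_subset_of_nonneg (Finset.image_subset_iff.mpr hmaps)
          (fun p _ _ => hψnn _)
    _ = ((Finset.Icc (-M) M).card : ℝ) * (2*T) := hbox_sum
    _ ≤ (5*(P+1)) * (8*L*(D+Δ⁻¹)) := by
        apply mul_le_mul hcard hT8 (by linarith) (by linarith)
    _ ≤ 100 * (P + 1) * (D + Δ⁻¹) * L := by
        have hX : (0:ℝ) ≤ (P+1)*(L*(D+Δ⁻¹)) :=
          mul_nonneg (by linarith) (mul_nonneg (by linarith) (by linarith))
        nlinarith [hX]
end

section
/- (Heath–Brown identity) Let z ≥ 1 and k ≥ 1 be integers. Then for every integer n with 1 ≤ n ≤ 2 z^k, Λ(n) = Σ_{j=1}^{k} (-1)^{j-1} C(k,j) Σ_{n₁ n₂ ⋯ n_{2j} = n, n_{j+1},…,n_{2j} ≤ z} (log n₁) μ(n_{j+1}) ⋯ μ(n_{2j}). -/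
open Real Finset ArithmeticFunction
open scoped ArithmeticFunction.zeta

namespace HBaux

/-- Möbius function restricted to `n ≤ z`. -/
noncomputable def muZ (z : ℕ) : ArithmeticFunction ℝ :=
  ⟨fun n => if n ≤ z then ((moebius n : ℤ) : ℝ) else 0, by simp⟩

lemma muZ_apply (z n : ℕ) : muZ z n = if n ≤ z then ((moebius n : ℤ) : ℝ) else 0 := rfl

lemma sumEval {ι : Type*} (s : Finset ι) (F : ι → ArithmeticFunction ℝ) (m : ℕ) :
    (∑ j ∈ s, F j) m = ∑ j ∈ s, F j m := by
  induction s using Finset.cons_induction with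
  | empty => simp
  | cons a s ha ih => rw [Finset.sum_cons, Finset.sum_cons, ArithmeticFunction.add_apply, ih]

lemma natCast_apply' (c m : ℕ) :
    ((c : ArithmeticFunction ℝ)) m = if m = 1 then (c : ℝ) else 0 := rfl

lemma natCast_mul_apply (c : ℕ) (F : ArithmeticFunction ℝ) (m : ℕ) :
    (((c : ArithmeticFunction ℝ)) * F) m = (c : ℝ) * F m := by
  rcases eq_or_ne m 0 with rfl | hm
  · simp
  · rw [ArithmeticFunction.mul_apply]
    rw [Finset.sum_eq_single_of_mem ((1 : ℕ), m)
      (by rw [Nat.mem_divisorsAntidiagonal]; exact ⟨one_mul m, hm⟩)]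
    · rw [natCast_apply', if_pos rfl]
    · rintro ⟨d, e⟩ hde hne
      rw [Nat.mem_divisorsAntidiagonal] at hde
      have hde1 : d * e = m := hde.1
      have hd : d ≠ 1 := by
        rintro rfl
        exact hne (by rw [Prod.mk.injEq]; exact ⟨rfl, by rw [← hde1, one_mul]⟩)
      rw [natCast_apply', if_neg hd, zero_mul]

lemma neg_one_pow_mul_apply (p : ℕ) (F : ArithmeticFunction ℝ) (m : ℕ) :
    (((-1 : ArithmeticFunction ℝ)) ^ p * F) m = (-1 : ℝ) ^ p * F m := by
  induction p generalizing F with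
  | zero => rw [pow_zero, pow_zero, one_mul, one_mul]
  | succ p ih =>
    have h : ((-1 : ArithmeticFunction ℝ)) ^ (p + 1) * F = ((-1 : ArithmeticFunction ℝ)) ^ p * (-F) := by
      ring
    rw [h, ih (-F)]
    have h2 : (-F) m = -(F m) := rfl
    rw [h2]
    ring

/-- supported-large convolution vanishing -/
lemma mul_vanish {F G : ArithmeticFunction ℝ} {a b : ℕ}
    (hF : ∀ m, m < a → F m = 0) (hG : ∀ m, m < b → G m = 0) :
    ∀ m, m < a * b → (F * G) m = 0 := by
  intro m hm
  rw [ArithmeticFunction.mul_apply]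
  apply Finset.sum_eq_zero
  rintro ⟨d, e⟩ hde
  rw [Nat.mem_divisorsAntidiagonal] at hde
  have hde1 : d * e = m := hde.1
  by_cases hd : d < a
  · rw [hF d hd, zero_mul]
  · have he : e < b := by
      by_contra he
      push_neg at hd he
      have h1 : a * b ≤ d * e := Nat.mul_le_mul hd he
      omega
    rw [hG e he, mul_zero]

lemma pow_vanish {F : ArithmeticFunction ℝ} {a : ℕ} (hF : ∀ m, m < a → F m = 0) (k : ℕ) :
    ∀ m, m < a ^ k → (F ^ k) m = 0 := by
  induction k with
  | zero =>
    intro m hm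
    rw [pow_zero] at hm
    have : m = 0 := by omega
    subst this
    simp
  | succ k ih =>
    intro m hm
    rw [pow_succ]
    exact mul_vanish ih hF m (by rw [← pow_succ]; exact hm)

lemma sub_vanish (z : ℕ) (hz : 1 ≤ z) :
    ∀ m, m < z + 1 →
      ((1 : ArithmeticFunction ℝ) - (ζ : ArithmeticFunction ℝ) * muZ z) m = 0 := by
  intro m hm
  have hsub : ∀ (F G : ArithmeticFunction ℝ) (x : ℕ), (F - G) x = F x - G x := by
    intro F G x
    rw [sub_eq_add_neg, ArithmeticFunction.add_apply, sub_eq_add_neg]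
    rfl
  rw [hsub]
  have key : ((ζ : ArithmeticFunction ℝ) * muZ z) m
      = ((ζ : ArithmeticFunction ℝ) * (moebius : ArithmeticFunction ℝ)) m := by
    rw [ArithmeticFunction.mul_apply, ArithmeticFunction.mul_apply]
    apply Finset.sum_congr rfl
    rintro ⟨d, e⟩ hde
    rw [Nat.mem_divisorsAntidiagonal] at hde
    have hde1 : d * e = m := hde.1
    have hm0 : m ≠ 0 := hde.2
    have he : e ≤ z := by
      have hedvd : e ∣ m := Dvd.intro_left d hde1
      have := Nat.le_of_dvd (Nat.pos_of_ne_zero hm0) hedvd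
      omega
    show (ζ : ArithmeticFunction ℝ) d * muZ z e = _
    rw [muZ_apply, if_pos he, ArithmeticFunction.intCoe_apply]
  rw [key, ArithmeticFunction.coe_zeta_mul_coe_moebius, sub_self]

/-- binomial identity in a commutative ring -/
lemma ring_id {R : Type*} [CommRing R] (A : R) (k : ℕ) :
    (1 : R) = (1 - A) ^ k +
      ∑ j ∈ Finset.Icc 1 k, (-1 : R) ^ (j - 1) * (k.choose j : R) * A ^ j := by
  have h : (1 - A) ^ k = ∑ j ∈ Finset.range (k + 1),
      (-1 : R) ^ j * (k.choose j : R) * A ^ j := by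
    rw [sub_eq_add_neg, add_comm, add_pow]
    apply Finset.sum_congr rfl
    intro j hj
    rw [one_pow, neg_pow]
    ring
  rw [h, Finset.range_eq_Ico, Finset.sum_eq_sum_Ico_succ_bot (Nat.succ_pos k),
    (show Finset.Ico (0 + 1) k.succ = Finset.Icc 1 k by
      ext x; simp only [Finset.mem_Ico, Finset.mem_Icc]; omega)]
  simp only [pow_zero, Nat.choose_zero_right, Nat.cast_one, mul_one, one_mul]
  have h2 : ∑ j ∈ Finset.Icc 1 k, (-1 : R) ^ (j - 1) * (k.choose j : R) * A ^ j
      = - ∑ j ∈ Finset.Icc 1 k, (-1 : R) ^ j * (k.choose j : R) * A ^ j := by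
    rw [← Finset.sum_neg_distrib]
    apply Finset.sum_congr rfl
    intro j hj
    rw [Finset.mem_Icc] at hj
    obtain ⟨i, rfl⟩ : ∃ i, j = i + 1 := ⟨j - 1, by omega⟩
    simp only [Nat.add_sub_cancel, pow_succ]
    ring
  rw [h2]
  ring

/-- convolution of several functions as a sum over `finMulAntidiag` -/
lemma prod_apply_fin :
    ∀ (r : ℕ) (G : Fin r → ArithmeticFunction ℝ) (n : ℕ), n ≠ 0 →
      (∏ i, G i) n = ∑ f ∈ Nat.finMulAntidiag r n, ∏ i, G i (f i) := by
  intro r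
  induction r with
  | zero =>
    intro G n hn
    rcases eq_or_ne n 1 with rfl | h1
    · rw [Nat.finMulAntidiag_one]
      simp [ArithmeticFunction.one_apply]
    · rw [Nat.finMulAntidiag_zero_left h1]
      simp [ArithmeticFunction.one_apply, h1]
  | succ r ih =>
    intro G n hn
    rw [Fin.prod_univ_succ, ArithmeticFunction.mul_apply]
    have step : ∀ p ∈ n.divisorsAntidiagonal,
        G 0 p.1 * (∏ i : Fin r, G i.succ) p.2
          = ∑ g ∈ Nat.finMulAntidiag r p.2, G 0 p.1 * ∏ i : Fin r, G i.succ (g i) := by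
      rintro ⟨a, b⟩ hab
      rw [Nat.mem_divisorsAntidiagonal] at hab
      have hab1 : a * b = n := hab.1
      have hb : b ≠ 0 := by
        intro h; rw [h, mul_zero] at hab1; exact hn hab1.symm
      show G 0 a * (∏ i : Fin r, G i.succ) b = _
      rw [ih (fun i => G i.succ) b hb, Finset.mul_sum]
    rw [Finset.sum_congr rfl step, Finset.sum_sigma']
    refine Finset.sum_nbij'
      (fun x => Fin.cons x.1.1 x.2)
      (fun f => ⟨(f 0, ∏ i : Fin r, f i.succ), fun i => f i.succ⟩)
      ?_ ?_ ?_ ?_ ?_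
    · rintro ⟨⟨a, b⟩, g⟩ hx
      simp only [Finset.mem_sigma, Nat.mem_divisorsAntidiagonal, Nat.mem_finMulAntidiag] at hx
      rw [Nat.mem_finMulAntidiag]
      refine ⟨?_, hx.1.2⟩
      simp only [Fin.prod_univ_succ, Fin.cons_zero, Fin.cons_succ]
      have hgb : (∏ i : Fin r, g i) = b := hx.2.1
      rw [hgb]
      exact hx.1.1
    · intro f hf
      rw [Nat.mem_finMulAntidiag] at hf
      have hprod : f 0 * ∏ i : Fin r, f i.succ = n := by
        rw [← hf.1, Fin.prod_univ_succ]
      have hne : (∏ i : Fin r, f i.succ) ≠ 0 := by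
        intro h
        rw [h, mul_zero] at hprod
        exact hf.2 hprod.symm
      rw [Finset.mem_sigma, Nat.mem_divisorsAntidiagonal, Nat.mem_finMulAntidiag]
      exact ⟨⟨hprod, hf.2⟩, rfl, hne⟩
    · rintro ⟨⟨a, b⟩, g⟩ hx
      simp only [Finset.mem_sigma, Nat.mem_divisorsAntidiagonal, Nat.mem_finMulAntidiag] at hx
      refine Sigma.ext ?_ ?_
      · simp only [Fin.cons_zero, Fin.cons_succ]
        rw [Prod.mk.injEq]
        exact ⟨rfl, hx.2.1⟩
      · simp only [Fin.cons_succ]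
        exact heq_of_eq rfl
    · intro f hf
      exact Fin.cons_self_tail f
    · rintro ⟨⟨a, b⟩, g⟩ hx
      simp only [Fin.prod_univ_succ, Fin.cons_zero, Fin.cons_succ]

/-- the factor functions -/
noncomputable def Hf (z j : ℕ) : ℕ → ArithmeticFunction ℝ := fun i =>
  if i = 0 then ArithmeticFunction.log
  else if i < j then (ζ : ArithmeticFunction ℝ)
  else if i < 2 * j then muZ z
  else 1

lemma prod_Hf (z k j : ℕ) (hj1 : 1 ≤ j) (hjk : j ≤ k) :
    (∏ i ∈ Finset.range (2 * k), Hf z j i)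
      = ArithmeticFunction.log * (ζ : ArithmeticFunction ℝ) ^ (j - 1) * muZ z ^ j := by
  have h1 : (1 : ℕ) ≤ j := hj1
  have h2 : j ≤ 2 * j := by omega
  have h3 : 2 * j ≤ 2 * k := by omega
  rw [Finset.range_eq_Ico, ← Finset.prod_Ico_consecutive _ (Nat.zero_le (2 * j)) h3,
    ← Finset.prod_Ico_consecutive _ (Nat.zero_le j) h2,
    ← Finset.prod_Ico_consecutive _ (Nat.zero_le 1) h1]
  have e1 : (∏ i ∈ Finset.Ico 0 1, Hf z j i) = ArithmeticFunction.log := by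
    rw [show Finset.Ico 0 1 = {0} from rfl, Finset.prod_singleton]
    simp [Hf]
  have e2 : (∏ i ∈ Finset.Ico 1 j, Hf z j i) = (ζ : ArithmeticFunction ℝ) ^ (j - 1) := by
    rw [Finset.prod_congr rfl (fun i hi => ?_), Finset.prod_const, Nat.card_Ico]
    rw [Finset.mem_Ico] at hi
    simp only [Hf]
    rw [if_neg (by omega), if_pos hi.2]
  have e3 : (∏ i ∈ Finset.Ico j (2 * j), Hf z j i) = muZ z ^ j := by
    rw [Finset.prod_congr rfl (fun i hi => ?_), Finset.prod_const, Nat.card_Ico,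
      show 2 * j - j = j by omega]
    rw [Finset.mem_Ico] at hi
    simp only [Hf]
    rw [if_neg (by omega), if_neg (by omega), if_pos hi.2]
  have e4 : (∏ i ∈ Finset.Ico (2 * j) (2 * k), Hf z j i) = 1 := by
    apply Finset.prod_eq_one
    intro i hi
    rw [Finset.mem_Ico] at hi
    simp only [Hf]
    rw [if_neg (by omega), if_neg (by omega), if_neg (by omega)]
  rw [e1, e2, e3, e4, mul_one]

lemma inner_eq (z k j n : ℕ) (hz : 1 ≤ z) (hj1 : 1 ≤ j) (hjk : j ≤ k) (hn1 : 1 ≤ n) :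
    ((ArithmeticFunction.vonMangoldt * ((ζ : ArithmeticFunction ℝ) * muZ z) ^ j) n) =
      ∑ f ∈ (Fintype.piFinset fun _ : Fin (2 * k) => Finset.Icc 1 n).filter
          (fun f => (∏ i, f i) = n ∧ (∀ i : Fin (2 * k), 2 * j ≤ (i : ℕ) → f i = 1) ∧
            (∀ i : Fin (2 * k), j ≤ (i : ℕ) → (i : ℕ) < 2 * j → f i ≤ z)),
        Real.log (f ⟨0, by omega⟩) *
          ∏ i ∈ Finset.univ.filter (fun i : Fin (2 * k) => j ≤ (i : ℕ) ∧ (i : ℕ) < 2 * j),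
            ((moebius (f i) : ℤ) : ℝ) := by
  have hn0 : n ≠ 0 := by omega
  -- rewrite LHS as a convolution product over 2k factors
  have hexp : ArithmeticFunction.vonMangoldt * ((ζ : ArithmeticFunction ℝ) * muZ z) ^ j
      = ∏ i : Fin (2 * k), Hf z j (i : ℕ) := by
    rw [Fin.prod_univ_eq_prod_range (fun i => Hf z j i) (2 * k), prod_Hf z k j hj1 hjk]
    obtain ⟨i, rfl⟩ : ∃ i, j = i + 1 := ⟨j - 1, by omega⟩
    simp only [Nat.add_sub_cancel]
    calc ArithmeticFunction.vonMangoldt * ((ζ : ArithmeticFunction ℝ) * muZ z) ^ (i + 1)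
        = ArithmeticFunction.vonMangoldt * (ζ : ArithmeticFunction ℝ)
            * ((ζ : ArithmeticFunction ℝ) ^ i * muZ z ^ (i + 1)) := by ring
      _ = ArithmeticFunction.log * (ζ : ArithmeticFunction ℝ) ^ i * muZ z ^ (i + 1) := by
          rw [ArithmeticFunction.vonMangoldt_mul_zeta]; ring
  rw [hexp, prod_apply_fin _ _ n hn0]
  -- identify the index sets
  have hset : Nat.finMulAntidiag (2 * k) n
      = (Fintype.piFinset fun _ : Fin (2 * k) => Finset.Icc 1 n).filter
          (fun f => (∏ i, f i) = n) := by
    ext f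
    simp only [Nat.mem_finMulAntidiag, Finset.mem_filter, Fintype.mem_piFinset, Finset.mem_Icc]
    constructor
    · rintro ⟨hprod, -⟩
      refine ⟨fun i => ?_, hprod⟩
      have hdvd : f i ∣ n := by rw [← hprod]; exact Finset.dvd_prod_of_mem f (Finset.mem_univ i)
      have hne : f i ≠ 0 := ne_zero_of_dvd_ne_zero hn0 hdvd
      exact ⟨by omega, Nat.le_of_dvd (by omega) hdvd⟩
    · rintro ⟨-, hprod⟩
      exact ⟨hprod, hn0⟩
  rw [hset]
  -- restrict the sum to tuples satisfying the side conditions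
  rw [show ((Fintype.piFinset fun _ : Fin (2 * k) => Finset.Icc 1 n).filter
        (fun f => (∏ i, f i) = n ∧ (∀ i : Fin (2 * k), 2 * j ≤ (i : ℕ) → f i = 1) ∧
          (∀ i : Fin (2 * k), j ≤ (i : ℕ) → (i : ℕ) < 2 * j → f i ≤ z)))
      = ((Fintype.piFinset fun _ : Fin (2 * k) => Finset.Icc 1 n).filter
          (fun f => (∏ i, f i) = n)).filter
          (fun f => (∀ i : Fin (2 * k), 2 * j ≤ (i : ℕ) → f i = 1) ∧
            (∀ i : Fin (2 * k), j ≤ (i : ℕ) → (i : ℕ) < 2 * j → f i ≤ z)) from by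
      rw [Finset.filter_filter]]
  have hzero : ∀ f ∈ (Fintype.piFinset fun _ : Fin (2 * k) => Finset.Icc 1 n).filter
        (fun f => (∏ i, f i) = n),
      (∏ i : Fin (2 * k), Hf z j (i : ℕ) (f i)) ≠ 0 →
        ((∀ i : Fin (2 * k), 2 * j ≤ (i : ℕ) → f i = 1) ∧
          (∀ i : Fin (2 * k), j ≤ (i : ℕ) → (i : ℕ) < 2 * j → f i ≤ z)) := by
    intro f hf hne
    rw [Finset.mem_filter] at hf
    obtain ⟨hmem, hprod⟩ := hf
    constructor
    · intro i hi
      by_contra hfi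
      apply hne
      apply Finset.prod_eq_zero (Finset.mem_univ i)
      simp only [Hf]
      rw [if_neg (by omega), if_neg (by omega), if_neg (by omega),
        ArithmeticFunction.one_apply, if_neg hfi]
    · intro i hij hij2
      by_contra hfi
      apply hne
      apply Finset.prod_eq_zero (Finset.mem_univ i)
      simp only [Hf]
      rw [if_neg (by omega), if_neg (by omega), if_pos hij2, muZ_apply, if_neg (by omega)]
  rw [← Finset.sum_filter_of_ne hzero]
  · -- termwise equality on the restricted set
    apply Finset.sum_congr rfl
    intro f hf
    simp only [Finset.mem_filter, Fintype.mem_piFinset, Finset.mem_Icc] at hf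
    obtain ⟨⟨hmem, hprod⟩, hB, hC⟩ := hf
    rw [← Finset.prod_filter_mul_prod_filter_not Finset.univ
      (fun i : Fin (2 * k) => j ≤ (i : ℕ) ∧ (i : ℕ) < 2 * j)]
    have hmid : (∏ i ∈ Finset.univ.filter
          (fun i : Fin (2 * k) => j ≤ (i : ℕ) ∧ (i : ℕ) < 2 * j), Hf z j (i : ℕ) (f i))
        = ∏ i ∈ Finset.univ.filter
          (fun i : Fin (2 * k) => j ≤ (i : ℕ) ∧ (i : ℕ) < 2 * j), ((moebius (f i) : ℤ) : ℝ) := by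
      apply Finset.prod_congr rfl
      intro i hi
      rw [Finset.mem_filter] at hi
      obtain ⟨-, hij, hij2⟩ := hi
      simp only [Hf]
      rw [if_neg (by omega), if_neg (by omega), if_pos hij2, muZ_apply,
        if_pos (hC i hij hij2)]
    have hrest : (∏ i ∈ Finset.univ.filter
          (fun i : Fin (2 * k) => ¬(j ≤ (i : ℕ) ∧ (i : ℕ) < 2 * j)), Hf z j (i : ℕ) (f i))
        = Real.log (f ⟨0, by omega⟩) := by
      rw [Finset.prod_eq_single_of_mem (⟨0, by omega⟩ : Fin (2 * k))]
      · simp [Hf, ArithmeticFunction.log_apply]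
      · rw [Finset.mem_filter]
        refine ⟨Finset.mem_univ _, ?_⟩
        show ¬(j ≤ 0 ∧ 0 < 2 * j)
        omega
      · intro b hb hne
        rw [Finset.mem_filter] at hb
        have hb0 : (b : ℕ) ≠ 0 := by
          intro h
          exact hne (Fin.ext h)
        by_cases hbj : (b : ℕ) < j
        · simp only [Hf]
          rw [if_neg hb0, if_pos hbj, ArithmeticFunction.natCoe_apply,
            ArithmeticFunction.zeta_apply_ne (by have := hmem b; omega), Nat.cast_one]
        · have hb2j : 2 * j ≤ (b : ℕ) := by
            rcases hb with ⟨-, hnot⟩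
            omega
          simp only [Hf]
          rw [if_neg hb0, if_neg hbj, if_neg (by omega), hB b hb2j,
            ArithmeticFunction.one_apply, if_pos rfl]
    rw [hmid, hrest, mul_comm]

end HBaux

open HBaux

theorem heath_brown_identity (z k : ℕ) (hz : 1 ≤ z) (hk : 1 ≤ k) (n : ℕ) (hn1 : 1 ≤ n)
    (hn : n ≤ 2 * z ^ k) :
    (ArithmeticFunction.vonMangoldt n : ℝ) =
      ∑ j ∈ Finset.Icc 1 k, (-1 : ℝ) ^ (j - 1) * (k.choose j) *
        ∑ f ∈ (Fintype.piFinset fun _ : Fin (2 * k) => Finset.Icc 1 n).filter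
            (fun f => (∏ i, f i) = n ∧ (∀ i : Fin (2 * k), 2 * j ≤ (i : ℕ) → f i = 1) ∧
              (∀ i : Fin (2 * k), j ≤ (i : ℕ) → (i : ℕ) < 2 * j → f i ≤ z)),
          Real.log (f ⟨0, by omega⟩) *
            ∏ i ∈ Finset.univ.filter (fun i : Fin (2 * k) => j ≤ (i : ℕ) ∧ (i : ℕ) < 2 * j),
              (ArithmeticFunction.moebius (f i) : ℝ) := by
  set A : ArithmeticFunction ℝ := (ζ : ArithmeticFunction ℝ) * muZ z with hA
  have hvanish : (ArithmeticFunction.vonMangoldt * (1 - A) ^ k) n = 0 := by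
    apply mul_vanish (a := 2) (b := (z + 1) ^ k) ?_ ?_ n ?_
    · intro m hm
      interval_cases m
      · exact ArithmeticFunction.map_zero
      · exact ArithmeticFunction.vonMangoldt_apply_one
    · exact pow_vanish (sub_vanish z hz) k
    · have hlt : z ^ k < (z + 1) ^ k := Nat.pow_lt_pow_left (by omega) (by omega)
      omega
  have key : (ArithmeticFunction.vonMangoldt n : ℝ)
      = ∑ j ∈ Finset.Icc 1 k, ((-1 : ℝ) ^ (j - 1) * (k.choose j : ℝ))
          * ((ArithmeticFunction.vonMangoldt * A ^ j) n) := by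
    conv_lhs => rw [← mul_one ArithmeticFunction.vonMangoldt, ring_id A k, mul_add,
      ArithmeticFunction.add_apply, hvanish, zero_add, Finset.mul_sum, sumEval]
    apply Finset.sum_congr rfl
    intro j hj
    have hcomm : ArithmeticFunction.vonMangoldt
          * ((-1 : ArithmeticFunction ℝ) ^ (j - 1) * ((k.choose j : ℕ) : ArithmeticFunction ℝ)
            * A ^ j)
        = (-1 : ArithmeticFunction ℝ) ^ (j - 1)
            * (((k.choose j : ℕ) : ArithmeticFunction ℝ)
              * (ArithmeticFunction.vonMangoldt * A ^ j)) := by ring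
    rw [hcomm, neg_one_pow_mul_apply, natCast_mul_apply, mul_assoc]
  rw [key]
  apply Finset.sum_congr rfl
  intro j hj
  rw [Finset.mem_Icc] at hj
  rw [inner_eq z k j n hz hj.1 hj.2 hn1]
end
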